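/- The stabilized semi-implicit scheme for a linear gradient flow is unconditionally energy stable: for the scheme (Φ^{n+1} - Φ^n)/δ = -M(A Φ^{n+1} + C(Φ^{n+1} - Φ^n)) with A symmetric positive semidefinite, C ≥ 0, M > 0, δ > 0, one has the energy decay (1/2)⟨A Φ^{n+1}, Φ^{n+1}⟩ ≤ (1/2)⟨A Φ^n, Φ^n⟩. -/

import Mathlib

open InnerProductSpace

/-!
Writing `d = Φ¹ - Φ⁰`, symmetry of `A` gives
`⟪A Φ¹, Φ¹⟫ - ⟪A Φ⁰, Φ⁰⟫ = 2 ⟪A Φ¹, d⟫ - ⟪A d, d⟫`, and the last term is nonnegative.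
Pairing the scheme with `d` gives `(1 + δ M C) ‖d‖² = -δ M ⟪A Φ¹, d⟫`, so `⟪A Φ¹, d⟫ ≤ 0`
whatever the size of the time step `δ`.
-/

namespace LinearMap

variable {H : Type*} [NormedAddCommGroup H] [InnerProductSpace ℝ H] {A : H →ₗ[ℝ] H}

theorem IsSymmetric.inner_map_self_sub_inner_map_self (hA : A.IsSymmetric) (a b : H) :
    ⟪A a, a⟫_ℝ - ⟪A b, b⟫_ℝ = 2 * ⟪A a, a - b⟫_ℝ - ⟪A (a - b), a - b⟫_ℝ := by
  obtain ⟨d, rfl⟩ : ∃ d, b = a - d := ⟨a - b, (sub_sub_cancel a b).symm⟩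
  have hcross : ⟪A d, a⟫_ℝ = ⟪A a, d⟫_ℝ := by
    rw [hA, real_inner_comm]
  simp only [sub_sub_cancel, map_sub, inner_sub_left, inner_sub_right, hcross]
  ring

theorem IsPositive.inner_map_self_le_of_inner_map_sub_nonpos (hA : A.IsPositive) {a b : H}
    (h : ⟪A a, a - b⟫_ℝ ≤ 0) : ⟪A a, a⟫_ℝ ≤ ⟪A b, b⟫_ℝ := by
  have hdiff := hA.isSymmetric.inner_map_self_sub_inner_map_self a b
  linarith [hA.inner_nonneg_left (a - b)]

end LinearMap

theorem real_inner_nonpos_of_eq_neg_smul_add_smul {H : Type*} [NormedAddCommGroup H]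
    [InnerProductSpace ℝ H] {v d : H} {τ C : ℝ} (hτ : 0 < τ) (hC : 0 ≤ C)
    (h : d = -(τ • (v + C • d))) : ⟪v, d⟫_ℝ ≤ 0 := by
  have hpair : ⟪d, d⟫_ℝ = -(τ * (⟪v, d⟫_ℝ + C * ⟪d, d⟫_ℝ)) := by
    have := congrArg (⟪·, d⟫_ℝ) h
    simpa only [inner_neg_left, real_inner_smul_left, inner_add_left] using this
  have hdd : 0 ≤ ⟪d, d⟫_ℝ := real_inner_self_nonneg
  nlinarith [mul_nonneg hC hdd]

theorem stabilized_scheme_energy_stable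
    {H : Type*} [NormedAddCommGroup H] [InnerProductSpace ℝ H]
    (A : H →ₗ[ℝ] H) (hsymm : ∀ u v, ⟪A u, v⟫_ℝ = ⟪u, A v⟫_ℝ)
    (hpsd : ∀ u, 0 ≤ ⟪A u, u⟫_ℝ)
    (M δ C : ℝ) (hM : 0 < M) (hδ : 0 < δ) (hC : 0 ≤ C)
    (Φ0 Φ1 : H)
    (hscheme : Φ1 - Φ0 = -((δ * M) • (A Φ1 + C • (Φ1 - Φ0)))) :
    ⟪A Φ1, Φ1⟫_ℝ ≤ ⟪A Φ0, Φ0⟫_ℝ :=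
  (A.isPositive_iff.mpr ⟨hsymm, hpsd⟩).inner_map_self_le_of_inner_map_sub_nonpos
    (real_inner_nonpos_of_eq_neg_smul_add_smul (mul_pos hδ hM) hC hscheme)
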